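/- Let b ∈ (0,1) be fixed. For a < 0 set w_- = (b - √(b² - 4a + 4a²))/(2b) and t_- = (2 - 2a - b² - b√(b² - 4a + 4a²))/(2(1-a)(1+b)), and define γ(a) = b ln(1 - t_-) + (1-b) ln t_- + a ln(-w_-) - a ln(1 - w_-) + b ln(1 - (1 - t_-)w_-) - a ln(-a) + a. Then, as a → 0⁻, γ(a) = b ln b + (1-b) ln(1-b) - 2a ln b + O(a²). -/

import Mathlib

open Asymptotics

/-- `w_-(a) = (b - √(b²-4a+4a²))/(2b)`. -/
noncomputable def wminus (b a : ℝ) : ℝ :=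
  (b - Real.sqrt (b ^ 2 - 4 * a + 4 * a ^ 2)) / (2 * b)

/-- `t_-(a) = (2-2a-b² - b√(b²-4a+4a²))/(2(1-a)(1+b))`. -/
noncomputable def tminus (b a : ℝ) : ℝ :=
  (2 - 2 * a - b ^ 2 - b * Real.sqrt (b ^ 2 - 4 * a + 4 * a ^ 2)) /
    (2 * (1 - a) * (1 + b))

/-- The matching constant
`γ(a) = b ln(1-t_-) + (1-b) ln t_- + a ln(-w_-) - a ln(1-w_-) + b ln(1-(1-t_-)w_-)
        - a ln(-a) + a`. -/
noncomputable def gammaFun (b a : ℝ) : ℝ :=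
  b * Real.log (1 - tminus b a) + (1 - b) * Real.log (tminus b a) +
    a * Real.log (-(wminus b a)) - a * Real.log (1 - wminus b a) +
    b * Real.log (1 - (1 - tminus b a) * wminus b a) - a * Real.log (-a) + a

/-- Smoothed version of `gammaFun`, with `a ln(-w₋) - a ln(-a)` replaced by
`a ln(2(1-a)/(b(b+√(b²-4a+4a²))))`. -/
noncomputable def Gfun (b a : ℝ) : ℝ :=
  b * Real.log (1 - tminus b a) + (1 - b) * Real.log (tminus b a) +
    a * Real.log (2 * (1 - a) / (b * (b + Real.sqrt (b ^ 2 - 4 * a + 4 * a ^ 2)))) -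
    a * Real.log (1 - wminus b a) +
    b * Real.log (1 - (1 - tminus b a) * wminus b a) + a

section values
variable {b : ℝ}

lemma sqrt0_val (hb : 0 < b) : Real.sqrt (b ^ 2 - 4 * (0:ℝ) + 4 * (0:ℝ) ^ 2) = b := by
  rw [show b ^ 2 - 4 * (0:ℝ) + 4 * (0:ℝ) ^ 2 = b ^ 2 by ring, Real.sqrt_sq hb.le]

lemma tminus_zero (hb : 0 < b) (hb1 : b < 1) : tminus b 0 = 1 - b := by
  unfold tminus
  rw [sqrt0_val hb]
  have h1b : (1:ℝ) + b ≠ 0 := by linarith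
  field_simp
  ring

lemma wminus_zero (hb : 0 < b) : wminus b 0 = 0 := by
  unfold wminus
  rw [sqrt0_val hb]
  simp

lemma Gfun_zero (hb : 0 < b) (hb1 : b < 1) :
    Gfun b 0 = b * Real.log b + (1 - b) * Real.log (1 - b) := by
  unfold Gfun
  rw [tminus_zero hb hb1, wminus_zero hb]
  simp

lemma gamma_eq_G (hb : 0 < b) {a : ℝ} (ha : a < 0) : gammaFun b a = Gfun b a := by
  have hP : 0 < b ^ 2 - 4 * a + 4 * a ^ 2 := by nlinarith
  set s := Real.sqrt (b ^ 2 - 4 * a + 4 * a ^ 2) with hsdef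
  have hs2 : s ^ 2 = b ^ 2 - 4 * a + 4 * a ^ 2 := Real.sq_sqrt hP.le
  have hsnn : 0 ≤ s := Real.sqrt_nonneg _
  have hbs : 0 < b + s := by linarith
  have hq : 0 < 2 * (1 - a) / (b * (b + s)) := by
    apply div_pos (by linarith) (by positivity)
  have key : -(wminus b a) = (-a) * (2 * (1 - a) / (b * (b + s))) := by
    unfold wminus
    rw [← hsdef]
    have hbne : (2:ℝ) * b ≠ 0 := by positivity
    field_simp
    linear_combination hs2
  unfold gammaFun Gfun
  rw [← hsdef, key, Real.log_mul (by linarith : -a ≠ 0) (ne_of_gt hq)]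
  ring

end values

section smooth
variable {b : ℝ}

lemma sqrt_arg_ne (hb : 0 < b) : b ^ 2 - 4 * (0:ℝ) + 4 * (0:ℝ) ^ 2 ≠ 0 := by
  have : b ^ 2 - 4 * (0:ℝ) + 4 * (0:ℝ) ^ 2 = b ^ 2 := by ring
  rw [this]; positivity

lemma contDiffAt_s (hb : 0 < b) :
    ContDiffAt ℝ 2 (fun a : ℝ => Real.sqrt (b ^ 2 - 4 * a + 4 * a ^ 2)) 0 := by
  have hP : ContDiffAt ℝ 2 (fun a : ℝ => b ^ 2 - 4 * a + 4 * a ^ 2) 0 := by fun_prop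
  exact hP.sqrt (sqrt_arg_ne hb)

lemma contDiffAt_T (hb : 0 < b) (hb1 : b < 1) :
    ContDiffAt ℝ 2 (fun a : ℝ => tminus b a) 0 := by
  unfold tminus
  apply ContDiffAt.div
  · exact (contDiffAt_const.sub (contDiffAt_const.mul contDiffAt_id)).sub
      contDiffAt_const |>.sub (contDiffAt_const.mul (contDiffAt_s hb))
  · fun_prop
  · show 2 * (1 - (0:ℝ)) * (1 + b) ≠ 0
    have : (0:ℝ) < 1 + b := by linarith
    positivity

lemma contDiffAt_W (hb : 0 < b) :
    ContDiffAt ℝ 2 (fun a : ℝ => wminus b a) 0 := by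
  unfold wminus
  apply ContDiffAt.div
  · exact contDiffAt_const.sub (contDiffAt_s hb)
  · fun_prop
  · show 2 * b ≠ 0; positivity

lemma contDiffAt_G (hb : 0 < b) (hb1 : b < 1) : ContDiffAt ℝ 2 (Gfun b) 0 := by
  unfold Gfun
  have hT := contDiffAt_T hb hb1
  have hW := contDiffAt_W hb
  have hT0 : tminus b 0 = 1 - b := tminus_zero hb hb1
  have hW0 : wminus b 0 = 0 := wminus_zero hb
  have h1 : ContDiffAt ℝ 2 (fun a : ℝ => b * Real.log (1 - tminus b a)) 0 := by
    apply ContDiffAt.mul contDiffAt_const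
    apply ContDiffAt.log (contDiffAt_const.sub hT)
    show (1:ℝ) - tminus b 0 ≠ 0
    rw [hT0]; intro h; absurd hb; linarith
  have h2 : ContDiffAt ℝ 2 (fun a : ℝ => (1 - b) * Real.log (tminus b a)) 0 := by
    apply ContDiffAt.mul contDiffAt_const
    apply ContDiffAt.log hT
    show tminus b 0 ≠ 0
    rw [hT0]; intro h; absurd hb1; linarith
  have h3 : ContDiffAt ℝ 2 (fun a : ℝ =>
      a * Real.log (2 * (1 - a) / (b * (b + Real.sqrt (b ^ 2 - 4 * a + 4 * a ^ 2))))) 0 := by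
    apply ContDiffAt.mul contDiffAt_id
    apply ContDiffAt.log
    · apply ContDiffAt.div
      · fun_prop
      · exact contDiffAt_const.mul (contDiffAt_const.add (contDiffAt_s hb))
      · show b * (b + Real.sqrt (b ^ 2 - 4 * (0:ℝ) + 4 * (0:ℝ) ^ 2)) ≠ 0
        rw [sqrt0_val hb]; positivity
    · show 2 * (1 - (0:ℝ)) / (b * (b + Real.sqrt (b ^ 2 - 4 * (0:ℝ) + 4 * (0:ℝ) ^ 2))) ≠ 0
      rw [sqrt0_val hb]; norm_num; positivity
  have h4 : ContDiffAt ℝ 2 (fun a : ℝ => a * Real.log (1 - wminus b a)) 0 := by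
    apply ContDiffAt.mul contDiffAt_id
    apply ContDiffAt.log (contDiffAt_const.sub hW)
    show (1:ℝ) - wminus b 0 ≠ 0
    rw [hW0]; norm_num
  have h5 : ContDiffAt ℝ 2
      (fun a : ℝ => b * Real.log (1 - (1 - tminus b a) * wminus b a)) 0 := by
    apply ContDiffAt.mul contDiffAt_const
    apply ContDiffAt.log (contDiffAt_const.sub ((contDiffAt_const.sub hT).mul hW))
    show (1:ℝ) - (1 - tminus b 0) * wminus b 0 ≠ 0
    rw [hW0]; norm_num
  exact ((((h1.add h2).add h3).sub h4).add h5).add contDiffAt_id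

end smooth

section derivs
variable {b : ℝ}

lemma hasDerivAt_s (hb : 0 < b) :
    HasDerivAt (fun a : ℝ => Real.sqrt (b ^ 2 - 4 * a + 4 * a ^ 2)) (-2 / b) 0 := by
  have hP : HasDerivAt (fun a : ℝ => b ^ 2 - 4 * a + 4 * a ^ 2) (-4) 0 := by
    have h1 : HasDerivAt (fun a : ℝ => 4 * a) 4 0 := by
      simpa using (hasDerivAt_id (0:ℝ)).const_mul 4
    have h2 : HasDerivAt (fun a : ℝ => 4 * a ^ 2) 0 0 := by
      simpa using (hasDerivAt_pow 2 (0:ℝ)).const_mul 4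
    exact (((hasDerivAt_const (0:ℝ) (b ^ 2)).sub h1).add h2).congr_deriv (by norm_num)
  have := hP.sqrt (sqrt_arg_ne hb)
  refine this.congr_deriv ?_
  symm
  rw [sqrt0_val hb]
  field_simp
  ring

lemma hasDerivAt_T (hb : 0 < b) (hb1 : b < 1) :
    HasDerivAt (fun a : ℝ => tminus b a) (1 - b) 0 := by
  unfold tminus
  have hN : HasDerivAt (fun a : ℝ => 2 - 2 * a - b ^ 2 - b * Real.sqrt (b ^ 2 - 4 * a + 4 * a ^ 2))
      (-2 - b * (-2 / b)) 0 := by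
    have h1 : HasDerivAt (fun a : ℝ => 2 - 2 * a - b ^ 2) (-2) 0 := by
      exact (((hasDerivAt_const (0:ℝ) 2).sub ((hasDerivAt_id (0:ℝ)).const_mul 2)).sub
        (hasDerivAt_const (0:ℝ) (b ^ 2))).congr_deriv (by norm_num)
    exact h1.sub ((hasDerivAt_s hb).const_mul b)
  have hD : HasDerivAt (fun a : ℝ => 2 * (1 - a) * (1 + b)) (2 * (0 - 1) * (1 + b)) 0 := by
    exact (((hasDerivAt_const (0:ℝ) 1).sub (hasDerivAt_id 0)).const_mul 2).mul_const (1 + b)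
  have hDne : 2 * (1 - (0:ℝ)) * (1 + b) ≠ 0 := by
    have : (0:ℝ) < 1 + b := by linarith
    positivity
  have := hN.div hD hDne
  refine this.congr_deriv ?_
  symm
  rw [sqrt0_val hb]
  have h1b : (1:ℝ) + b ≠ 0 := by positivity
  field_simp
  ring

lemma hasDerivAt_W (hb : 0 < b) :
    HasDerivAt (fun a : ℝ => wminus b a) (1 / b ^ 2) 0 := by
  unfold wminus
  have := ((hasDerivAt_const (0:ℝ) b).sub (hasDerivAt_s hb)).div_const (2 * b)
  refine this.congr_deriv ?_
  symm
  field_simp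
  ring

lemma hasDerivAt_G (hb : 0 < b) (hb1 : b < 1) :
    HasDerivAt (Gfun b) (-2 * Real.log b) 0 := by
  have hT := hasDerivAt_T hb hb1
  have hW := hasDerivAt_W hb
  have hT0 : tminus b 0 = 1 - b := tminus_zero hb hb1
  have hW0 : wminus b 0 = 0 := wminus_zero hb
  -- term 1 : b * log (1 - T)
  have h1 : HasDerivAt (fun a : ℝ => b * Real.log (1 - tminus b a)) (-(1 - b)) 0 := by
    have hin : HasDerivAt (fun a : ℝ => 1 - tminus b a) (0 - (1 - b)) 0 :=
      (hasDerivAt_const (0:ℝ) 1).sub hT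
    have hne : (1:ℝ) - tminus b 0 ≠ 0 := by rw [hT0]; intro h; absurd hb; linarith
    have := (hin.log hne).const_mul b
    refine this.congr_deriv ?_
    symm
    rw [hT0]
    rw [sub_sub_cancel, mul_div_cancel₀ _ hb.ne']; ring
  -- term 2 : (1-b) * log T
  have h2 : HasDerivAt (fun a : ℝ => (1 - b) * Real.log (tminus b a)) (1 - b) 0 := by
    have hne : tminus b 0 ≠ 0 := by rw [hT0]; intro h; absurd hb1; linarith
    have := (hT.log hne).const_mul (1 - b)
    refine this.congr_deriv ?_
    symm
    rw [hT0]
    field_simp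
  -- term 3 : a * log q
  have h3 : HasDerivAt (fun a : ℝ =>
      a * Real.log (2 * (1 - a) / (b * (b + Real.sqrt (b ^ 2 - 4 * a + 4 * a ^ 2)))))
      (-2 * Real.log b) 0 := by
    have hnum : HasDerivAt (fun a : ℝ => 2 * (1 - a)) (2 * (0 - 1)) 0 :=
      ((hasDerivAt_const (0:ℝ) 1).sub (hasDerivAt_id 0)).const_mul 2
    have hden : HasDerivAt (fun a : ℝ => b * (b + Real.sqrt (b ^ 2 - 4 * a + 4 * a ^ 2)))
        (b * (0 + -2 / b)) 0 :=
      ((hasDerivAt_const (0:ℝ) b).add (hasDerivAt_s hb)).const_mul b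
    have hdne : b * (b + Real.sqrt (b ^ 2 - 4 * (0:ℝ) + 4 * (0:ℝ) ^ 2)) ≠ 0 := by
      rw [sqrt0_val hb]; positivity
    have hq := hnum.div hden hdne
    have hqne : 2 * (1 - (0:ℝ)) / (b * (b + Real.sqrt (b ^ 2 - 4 * (0:ℝ) + 4 * (0:ℝ) ^ 2))) ≠ 0 := by
      rw [sqrt0_val hb]; norm_num; positivity
    have := (hasDerivAt_id (0:ℝ)).mul (hq.log hqne)
    refine this.congr_deriv ?_
    symm
    simp only [Pi.div_apply]
    rw [sqrt0_val hb]
    have harg : 2 * (1 - (0:ℝ)) / (b * (b + b)) = (b ^ 2)⁻¹ := by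
      field_simp; ring
    rw [harg, Real.log_inv, Real.log_pow]
    push_cast
    simp
  -- term 4 : a * log (1 - W)
  have h4 : HasDerivAt (fun a : ℝ => a * Real.log (1 - wminus b a)) 0 0 := by
    have hin : HasDerivAt (fun a : ℝ => 1 - wminus b a) (0 - 1 / b ^ 2) 0 :=
      (hasDerivAt_const (0:ℝ) 1).sub hW
    have hne : (1:ℝ) - wminus b 0 ≠ 0 := by rw [hW0]; norm_num
    have := (hasDerivAt_id (0:ℝ)).mul (hin.log hne)
    refine this.congr_deriv ?_
    symm
    rw [hW0]
    simp
  -- term 5 : b * log (1 - (1 - T) * W)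
  have h5 : HasDerivAt (fun a : ℝ => b * Real.log (1 - (1 - tminus b a) * wminus b a)) (-1) 0 := by
    have hin : HasDerivAt (fun a : ℝ => 1 - (1 - tminus b a) * wminus b a)
        (0 - ((0 - (1 - b)) * wminus b 0 + (1 - tminus b 0) * (1 / b ^ 2))) 0 :=
      (hasDerivAt_const (0:ℝ) 1).sub (((hasDerivAt_const (0:ℝ) 1).sub hT).mul hW)
    have hne : (1:ℝ) - (1 - tminus b 0) * wminus b 0 ≠ 0 := by rw [hW0]; norm_num
    have := (hin.log hne).const_mul b
    refine this.congr_deriv ?_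
    symm
    rw [hT0, hW0]
    field_simp
    ring
  have hid : HasDerivAt (fun a : ℝ => a) 1 0 := hasDerivAt_id 0
  have H := ((((h1.add h2).add h3).sub h4).add h5).add hid
  have : Gfun b = fun a : ℝ =>
      b * Real.log (1 - tminus b a) + (1 - b) * Real.log (tminus b a) +
        a * Real.log (2 * (1 - a) / (b * (b + Real.sqrt (b ^ 2 - 4 * a + 4 * a ^ 2)))) -
        a * Real.log (1 - wminus b a) +
        b * Real.log (1 - (1 - tminus b a) * wminus b a) + a := rfl
  rw [this]
  refine H.congr_deriv ?_
  symm
  ring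

end derivs

/-- Second-order Taylor: a C² function minus its first-order expansion is O(x²). -/
lemma taylor1_isBigO {f : ℝ → ℝ} (hf : ContDiffAt ℝ 2 f 0) :
    (fun x => f x - f 0 - deriv f 0 * x) =O[nhds 0] (fun x : ℝ => x ^ 2) := by
  obtain ⟨u, hu, hfu⟩ := hf.contDiffOn (le_refl 2) (by simp)
  obtain ⟨ε, hε, hball⟩ := Metric.mem_nhds_iff.1 hu
  have hfb : ContDiffOn ℝ 2 f (Metric.ball 0 ε) := hfu.mono hball
  have hgb : ContDiffOn ℝ 1 (deriv f) (Metric.ball 0 ε) :=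
    hfb.deriv_of_isOpen Metric.isOpen_ball (by norm_num)
  have hg0 : DifferentiableAt ℝ (deriv f) 0 :=
    ((hgb.differentiableOn (by norm_num)) 0 (Metric.mem_ball_self hε)).differentiableAt
      (Metric.isOpen_ball.mem_nhds (Metric.mem_ball_self hε))
  have hO : (fun x => deriv f x - deriv f 0) =O[nhds 0] (fun x : ℝ => x - 0) :=
    hg0.isBigO_sub
  rw [isBigO_iff] at hO
  obtain ⟨C, hC⟩ := hO
  rw [Metric.eventually_nhds_iff] at hC
  obtain ⟨δ, hδ, hCb⟩ := hC
  rw [isBigO_iff]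
  refine ⟨|C|, Metric.eventually_nhds_iff.2 ⟨min δ ε, lt_min hδ hε, fun x hx => ?_⟩⟩
  simp only [Real.dist_eq, sub_zero] at hx hCb
  have hseg : ∀ y ∈ segment ℝ (0:ℝ) x, |y| ≤ |x| := by
    intro y hy
    rw [segment_eq_uIcc] at hy
    rcases le_total (0:ℝ) x with h | h
    · rw [Set.uIcc_of_le h] at hy; rw [abs_of_nonneg hy.1, abs_of_nonneg h]; exact hy.2
    · rw [Set.uIcc_of_ge h] at hy; rw [abs_of_nonpos hy.2, abs_of_nonpos h]; linarith [hy.1]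
  have hder : ∀ y ∈ segment ℝ (0:ℝ) x,
      HasDerivWithinAt (fun z => f z - deriv f 0 * z) (deriv f y - deriv f 0)
        (segment ℝ (0:ℝ) x) y := by
    intro y hy
    have hyb : y ∈ Metric.ball (0:ℝ) ε := by
      simp only [Metric.mem_ball, Real.dist_eq, sub_zero]
      exact lt_of_le_of_lt (hseg y hy) (lt_of_lt_of_le hx (min_le_right _ _))
    have hdy : DifferentiableAt ℝ f y :=
      (hfb.contDiffAt (Metric.isOpen_ball.mem_nhds hyb)).differentiableAt (by norm_num)
    have := (hdy.hasDerivAt).sub ((hasDerivAt_id y).const_mul (deriv f 0))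
    exact this.hasDerivWithinAt.congr_deriv (by simp)
  have hbound : ∀ y ∈ segment ℝ (0:ℝ) x, ‖deriv f y - deriv f 0‖ ≤ |C| * |x| := by
    intro y hy
    have h1 : |y| < δ := lt_of_le_of_lt (hseg y hy) (lt_of_lt_of_le hx (min_le_left _ _))
    calc ‖deriv f y - deriv f 0‖ ≤ C * |y| := by simpa using hCb h1
      _ ≤ |C| * |y| := mul_le_mul_of_nonneg_right (le_abs_self C) (abs_nonneg y)
      _ ≤ |C| * |x| := mul_le_mul_of_nonneg_left (hseg y hy) (abs_nonneg C)
  have hmvt := (convex_segment (0:ℝ) x).norm_image_sub_le_of_norm_hasDerivWithin_le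
    hder hbound (left_mem_segment ℝ 0 x) (right_mem_segment ℝ 0 x)
  simp only [Real.norm_eq_abs, mul_zero, sub_zero] at hmvt ⊢
  calc |f x - f 0 - deriv f 0 * x| = |f x - deriv f 0 * x - f 0| := by ring_nf
    _ ≤ |C| * |x| * |x| := hmvt
    _ = |C| * |x ^ 2| := by rw [abs_pow]; ring


/-- As `a → 0⁻`, `γ(a) = b ln b + (1-b) ln(1-b) - 2a ln b + O(a²)`. -/
theorem gammaFun_expansion (b : ℝ) (hb : b ∈ Set.Ioo (0 : ℝ) 1) :
    (fun a : ℝ =>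
        gammaFun b a - (b * Real.log b + (1 - b) * Real.log (1 - b) - 2 * a * Real.log b))
      =O[nhdsWithin 0 (Set.Iio 0)] (fun a : ℝ => a ^ 2) := by
  obtain ⟨hb0, hb1⟩ := hb
  have key := taylor1_isBigO (contDiffAt_G hb0 hb1)
  rw [(hasDerivAt_G hb0 hb1).deriv, Gfun_zero hb0 hb1] at key
  have key' := key.mono (nhdsWithin_le_nhds (s := Set.Iio (0:ℝ)))
  refine key'.congr' ?_ Filter.EventuallyEq.rfl
  refine Filter.eventuallyEq_of_mem self_mem_nhdsWithin fun a ha => ?_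
  have ha' : a < 0 := ha
  rw [gamma_eq_G hb0 ha']
  ring
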